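/- arXiv:2308.10365 — 3 statements merged into one kernel-verified Lean document; each statement's English description precedes it below -/
import Mathlib

section
/- If dRSS(v_f, v_r) = 0 then v_r < v_f or v_r = v_f = 0, assuming b_min ≤ b_max, ρ > 0, a_max > 0, and v_f, v_r ≥ 0. -/
/-- The RSS safety distance. -/
noncomputable def dRSS (ρR amax bmin bmax vf vr : ℝ) : ℝ :=
  max 0 (vr * ρR + (1/2) * amax * ρR ^ 2 + (vr + amax * ρR) ^ 2 / (2 * bmin)
    - vf ^ 2 / (2 * bmax))

/-!
If `v_f ≤ v_r`, the front car's braking distance `v_f² / (2 b_max)` is at most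
`v_r² / (2 b_min)`, which the rear car's response-plus-braking distance strictly exceeds
(because `a_max ρ > 0`). So the term inside `dRSS` is positive, and `dRSS = 0` forces
`v_r < v_f`.
-/

lemma sq_div_two_mul_le_sq_div_two_mul {x y b b' : ℝ} (hx : 0 ≤ x) (hxy : x ≤ y)
    (hb : 0 < b) (hbb' : b ≤ b') : x ^ 2 / (2 * b') ≤ y ^ 2 / (2 * b) :=
  div_le_div₀ (sq_nonneg y) (pow_le_pow_left₀ hx hxy 2) (by positivity) (by linarith)

lemma sq_div_two_mul_lt_rear_distance {ρR amax bmin vr : ℝ} (hρ : 0 < ρR) (ha : 0 < amax)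
    (hbmin : 0 < bmin) (hvr : 0 ≤ vr) :
    vr ^ 2 / (2 * bmin) <
      vr * ρR + (1/2) * amax * ρR ^ 2 + (vr + amax * ρR) ^ 2 / (2 * bmin) := by
  have hsq : vr ^ 2 < (vr + amax * ρR) ^ 2 :=
    pow_lt_pow_left₀ (lt_add_of_pos_right vr (mul_pos ha hρ)) hvr two_ne_zero
  have hresponse : 0 ≤ vr * ρR + (1/2) * amax * ρR ^ 2 := by positivity
  linarith [div_lt_div_of_pos_right hsq (by positivity : (0:ℝ) < 2 * bmin)]

theorem dRSS_eq_zero_general (ρR amax bmin bmax vf vr : ℝ)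
    (hρ : 0 < ρR) (ha : 0 < amax) (hbmin : 0 < bmin)
    (hbb : bmin ≤ bmax) (hvf : 0 ≤ vf) (hvr : 0 ≤ vr)
    (h0 : dRSS ρR amax bmin bmax vf vr = 0) :
    vr < vf ∨ (vr = vf ∧ vf = 0) := by
  have hgap : vr * ρR + (1/2) * amax * ρR ^ 2 + (vr + amax * ρR) ^ 2 / (2 * bmin)
      - vf ^ 2 / (2 * bmax) ≤ 0 := max_eq_left_iff.mp h0
  left
  by_contra! hle
  have hfront := sq_div_two_mul_le_sq_div_two_mul hvf hle hbmin hbb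
  have hrear := sq_div_two_mul_lt_rear_distance hρ ha hbmin hvr
  linarith

/-- If `dRSS(vf, vr) = 0` (with `bmin ≤ bmax`, `ρ > 0`, `amax > 0`,
`vf, vr ≥ 0`) then `vr < vf` or `vr = vf = 0`. -/
theorem dRSS_eq_zero (ρR amax bmin bmax vf vr : ℝ)
    (hρ : 0 < ρR) (ha : 0 < amax) (hbmin : 0 < bmin) (hbmax : 0 < bmax)
    (hbb : bmin ≤ bmax) (hvf : 0 ≤ vf) (hvr : 0 ≤ vr)
    (h0 : dRSS ρR amax bmin bmax vf vr = 0) :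
    vr < vf ∨ (vr = vf ∧ vf = 0) :=
  dRSS_eq_zero_general ρR amax bmin bmax vf vr hρ ha hbmin hbb hvf hvr h0
end

section
/- Trace cut closure lemma: let C be an open assertion (defining an open subset of ℝ^V). If σ is a trace valid for a program from a store ρ with ρ ⊨ C and σ ⊭ C, then the ending state of the cut trace σ↓C satisfies the topological closure of C. -/
/-- A store assigns a real value to each variable. -/
abbrev Store (V : Type) := V → ℝ
/-- Assertions are predicates on stores. -/
abbrev Assertion (V : Type) := Store V → Prop

/-- A trace: a finite (`len = some n`) or infinite (`len = none`) sequence of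
pairs `(dur i, seg i)` where `seg i : [0, dur i] → Store V`. -/
structure Trace (V : Type) where
  len : Option ℕ
  dur : ℕ → ℝ
  seg : ℕ → ℝ → Store V

namespace Trace

variable {V : Type}

def idxOK (σ : Trace V) (i : ℕ) : Prop :=
  match σ.len with
  | some n => i < n
  | none => True

/-- `(i,t)` is in the domain of the trace. -/
def Dom (σ : Trace V) (i : ℕ) (t : ℝ) : Prop :=
  σ.idxOK i ∧ 0 ≤ t ∧ t ≤ σ.dur i

/-- The trace is finite. -/
def Fin' (σ : Trace V) : Prop := σ.len.isSome

/-- `σ ⊨ C`: the assertion holds everywhere along the trace. -/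
def Sat (σ : Trace V) (C : Assertion V) : Prop :=
  ∀ i t, σ.Dom i t → C (σ.seg i t)

/-- Ending state of a (finite) trace. -/
def endState (σ : Trace V) : Store V :=
  match σ.len with
  | some n => σ.seg (n - 1) (σ.dur (n - 1))
  | none => σ.seg 0 0

/-- The prefix `σ|_{(i,t)}`. -/
def restrict (σ : Trace V) (i : ℕ) (t : ℝ) : Trace V :=
  ⟨some (i + 1), fun j => if j = i then t else σ.dur j, σ.seg⟩

/-- The zero-duration trace at store `ρ`. -/
def zero (ρ : Store V) : Trace V :=
  ⟨some 1, fun _ => 0, fun _ _ => ρ⟩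

/-- The first `k` segments of a trace. -/
def take (σ : Trace V) (k : ℕ) : Trace V := ⟨some k, σ.dur, σ.seg⟩

/-- A one-segment trace. -/
def single (t : ℝ) (h : ℝ → Store V) : Trace V := ⟨some 1, fun _ => t, fun _ => h⟩

/-- Concatenation of traces (the first is assumed finite; otherwise result is the first). -/
def Concat (σ₁ σ₂ : Trace V) : Trace V :=
  match σ₁.len with
  | some m =>
      ⟨σ₂.len.map (· + m),
       fun i => if i < m then σ₁.dur i else σ₂.dur (i - m),
       fun i t => if i < m then σ₁.seg i t else σ₂.seg (i - m) t⟩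
  | none => σ₁

end Trace

/-- A (trace) semantics of a program: the valid traces from each initial store. -/
abbrev Sem (V : Type) := Store V → Trace V → Prop

/-- An infinite trace `σ` valid for a program (with semantics `sem`) from `ρ` is
incomplete: from some index `k` on, the total duration is bounded by `T0`, and there
is a valid trace extending the induced function past `T0`. -/
def Incomplete {V : Type} (sem : Sem V) (ρ : Store V) (σ : Trace V) : Prop :=
  σ.len = none ∧
  ∃ (k : ℕ) (T0 : ℝ),
    (∀ m : ℕ, (∑ i ∈ Finset.range m, σ.dur (k + i)) ≤ T0) ∧
    ∃ (t' : ℝ) (h' : ℝ → Store V) (τ : Trace V),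
      T0 ≤ t' ∧
      sem ρ ((σ.take k).Concat ((Trace.single t' h').Concat τ)) ∧
      ∀ m : ℕ, ∀ s : ℝ, 0 ≤ s → s ≤ σ.dur (k + m) →
        h' ((∑ i ∈ Finset.range m, σ.dur (k + i)) + s) = σ.seg (k + m) s

/-- Total correctness of the Hoare quintuple `A : [P] α [Q] : G` for a program
with trace semantics `sem`:
(1) termination: traces satisfying `A` throughout are finite or incomplete;
(2) postcondition: finite traces end in a state satisfying `Q`;
(3) safety: every prefix satisfying `A` throughout satisfies `G` throughout. -/
def Correct {V : Type} (sem : Sem V) (A P Q G : Assertion V) : Prop :=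
  ∀ ρ σ, P ρ → sem ρ σ →
    (σ.Sat A → (σ.Fin' ∨ Incomplete sem ρ σ)) ∧
    (σ.Fin' → Q σ.endState) ∧
    (∀ i t, σ.Dom i t → (σ.restrict i t).Sat A → (σ.restrict i t).Sat G)

/-- Semantics of `skip`. -/
def SkipSem {V : Type} : Sem V := fun ρ σ => σ = Trace.zero ρ

/-- Semantics of sequential composition. -/
def SeqSem {V : Type} (s1 s2 : Sem V) : Sem V := fun ρ σ =>
  (σ.len = none ∧ s1 ρ σ) ∨
  ∃ σ₁ σ₂, σ₁.Fin' ∧ s1 ρ σ₁ ∧ s2 σ₁.endState σ₂ ∧ σ = σ₁.Concat σ₂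

/-- Semantics of `if C then α else β`. -/
def IfSem {V : Type} (C : Assertion V) (s1 s2 : Sem V) : Sem V := fun ρ σ =>
  (C ρ ∧ s1 ρ σ) ∨ (¬ C ρ ∧ s2 ρ σ)

/-- Semantics of assignment `x := e`. -/
def AssignSem {V : Type} [DecidableEq V] (x : V) (e : Store V → ℝ) : Sem V := fun ρ σ =>
  σ = Trace.zero (Function.update ρ x (e ρ))

/-- `(i,t)` is the earliest point of the trace where `C` fails. -/
def LeastViolation {V : Type} (σ : Trace V) (C : Assertion V) (i : ℕ) (t : ℝ) : Prop :=
  σ.Dom i t ∧ ¬ C (σ.seg i t) ∧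
  ∀ i' t', σ.Dom i' t' → ¬ C (σ.seg i' t') → (i < i' ∨ (i = i' ∧ t ≤ t'))

/-- Semantics of `α ↓ C` (`α` as long as `C`): either a full trace of `α`
satisfying `C` throughout, or a trace of `α` cut at the first violation of `C`. -/
def AsLongAs {V : Type} (sem : Sem V) (C : Assertion V) : Sem V := fun ρ τ =>
  (sem ρ τ ∧ τ.Sat C) ∨
  (∃ σ i t, sem ρ σ ∧ LeastViolation σ C i t ∧ τ = σ.restrict i t)

/-- Semantics of the fallback `α ▷ β unless C until D`, i.e.
`(α ↓ C); if ¬(C ∧ D) then β`. -/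
def FallbackSem {V : Type} (s1 s2 : Sem V) (C D : Assertion V) : Sem V :=
  SeqSem (AsLongAs s1 C) (IfSem (fun ρ => ¬ (C ρ ∧ D ρ)) s2 SkipSem)

/-- `E` is an interruption-extension of `C0` for a program (semantics `sem`)
from `P` along `A`. -/
def IntExt {V : Type} (sem : Sem V) (C0 P A E : Assertion V) : Prop :=
  ∀ ρ σ, P ρ → sem ρ σ → ∀ i t, σ.Dom i t →
    (∀ i' t', σ.Dom i' t' → (i' < i ∨ (i' = i ∧ t' < t)) →
      A (σ.seg i' t') ∧ C0 (σ.seg i' t')) →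
    A (σ.seg i t) → E (σ.seg i t)

/-- Trace cut closure lemma: for an open condition `C` (an open set of
stores), if a trace with continuous, endpoint-connected segments starts in
`C` but violates `C` at its earliest violation point `(i,t)`, then the ending
state of the cut trace `σ ↓ C` lies in the topological closure of `C`. -/
theorem trace_cut_closure {V : Type} (σ : Trace V) (C : Set (Store V))
    (hC : IsOpen C)
    (hdur : ∀ i, σ.idxOK i → 0 ≤ σ.dur i)
    (hcont : ∀ i, σ.idxOK i → ContinuousOn (σ.seg i) (Set.Icc 0 (σ.dur i)))
    (hconn : ∀ i, σ.idxOK (i + 1) → σ.seg (i + 1) 0 = σ.seg i (σ.dur i))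
    (hstart : σ.seg 0 0 ∈ C)
    (i : ℕ) (t : ℝ) (h : LeastViolation σ (fun s => s ∈ C) i t) :
    (σ.restrict i t).endState ∈ closure C := by
  obtain ⟨⟨hidx, ht0, htd⟩, hnC, hmin⟩ := h
  have hgoal : (σ.restrict i t).endState = σ.seg i t := by
    simp [Trace.endState, Trace.restrict]
  rw [hgoal]
  -- t > 0
  have ht : 0 < t := by
    rcases lt_or_eq_of_le ht0 with h' | h'
    · exact h'
    · exfalso
      subst h'
      cases i with
      | zero => exact hnC hstart
      | succ j =>
        have hidxj : σ.idxOK j := by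
          unfold Trace.idxOK at hidx ⊢
          cases hl : σ.len with
          | none => trivial
          | some n => rw [hl] at hidx; omega
        have hdomj : σ.Dom j (σ.dur j) := ⟨hidxj, hdur j hidxj, le_refl _⟩
        have hCj : σ.seg j (σ.dur j) ∈ C := by
          by_contra hc
          rcases hmin j (σ.dur j) hdomj hc with h1 | ⟨h1, _⟩ <;> omega
        rw [hconn j hidx] at hnC
        exact hnC hCj
  have hCsub : ∀ s ∈ Set.Ico 0 t, σ.seg i s ∈ C := by
    intro s hs
    by_contra hc
    have hdom : σ.Dom i s := ⟨hidx, hs.1, le_trans hs.2.le htd⟩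
    rcases hmin i s hdom hc with h1 | ⟨_, h2⟩
    · omega
    · exact absurd hs.2 (not_lt.mpr h2)
  have hcw : ContinuousWithinAt (σ.seg i) (Set.Ico 0 t) t :=
    ((hcont i hidx) t ⟨ht0, htd⟩).mono
      (fun x hx => ⟨hx.1, le_trans hx.2.le htd⟩)
  have htcl : t ∈ closure (Set.Ico 0 t) := by
    rw [closure_Ico ht.ne]
    exact ⟨ht0, le_refl t⟩
  have := hcw.mem_closure_image htcl
  exact closure_mono (Set.image_subset_iff.mpr hCsub) this
end

section
/- One-way traffic goal achievement under the strong assumption: consider the dynamics of Example 'one-way traffic' where SV runs the program α ≡ (dwhile (v > v_min ∧ x < y_tgt) brake); (dwhile (x < y_tgt) cruise); (dwhile (v > 0) brake), with brake dynamics ẋ = v, v̇ = −b_min and cruise dynamics ẋ = v, v̇ = 0, while POV has ẋ_f = v_f, v̇_f = a_f. Under assumption A ≡ (−b_min < a_f < a_max ∧ v_f > v_min) and precondition P ≡ (x_f − x > dRSS(v_f, v) ∧ v > 0), every execution of α terminates with v = 0 and x ≥ y_tgt, and x < x_f holds throughout. -/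
/-!
Safety is carried by the gap `xf - x` and the braking margin
`E = (xf + vf² / (2 bmin)) - (x + v² / (2 bmin))`, both positive initially by the `dRSS`
precondition. The gap grows whenever SV is not faster than POV. While SV brakes, `E` and the
relative speed `vf - v` are nondecreasing, since `E' = vf (bmin + af) / bmin` and
`(vf - v)' = af + bmin`; so the gap is at least `E > 0` while SV is faster, and once the relative
speed reaches `0` (where the gap equals `E`) the gap only grows. While SV cruises its speed is at
most `vmin < vf`, so the gap grows and `E` dominates it.
-/

open Set

lemma forall_hasDerivWithinAt_mono {f f' : ℝ → ℝ} {s t : Set ℝ}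
    (hf : ∀ r ∈ s, HasDerivWithinAt f (f' r) s r) (hts : t ⊆ s) :
    ∀ r ∈ t, HasDerivWithinAt f (f' r) t r :=
  fun r hr => (hf r (hts hr)).mono hts

lemma monotoneOn_Icc_of_hasDerivWithinAt_nonneg {f f' : ℝ → ℝ} {a b : ℝ}
    (hf : ∀ t ∈ Icc a b, HasDerivWithinAt f (f' t) (Icc a b) t)
    (hf' : ∀ t ∈ Ioo a b, 0 ≤ f' t) : MonotoneOn f (Icc a b) := by
  refine monotoneOn_of_hasDerivWithinAt_nonneg (convex_Icc a b)
    (fun t ht => (hf t ht).continuousWithinAt) (fun t ht => ?_) (by rwa [interior_Icc])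
  rw [interior_Icc] at ht ⊢
  exact (hf t (Ioo_subset_Icc_self ht)).mono Ioo_subset_Icc_self

lemma eq_left_of_hasDerivWithinAt_zero {f : ℝ → ℝ} {a b : ℝ}
    (hf : ∀ t ∈ Icc a b, HasDerivWithinAt f 0 (Icc a b) t) : ∀ t ∈ Icc a b, f t = f a :=
  constant_of_has_deriv_right_zero (fun t ht => (hf t ht).continuousWithinAt) fun t ht =>
    (hf t (Ico_subset_Icc_self ht)).mono_of_mem_nhdsWithin (Icc_mem_nhdsGE_of_mem ht)

lemma le_of_forall_Ico_le {f : ℝ → ℝ} {a b c : ℝ} (hab : a < b)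
    (hf : ContinuousWithinAt f (Icc a b) b) (h : ∀ t ∈ Ico a b, c ≤ f t) : c ≤ f b :=
  ContinuousWithinAt.closure_le (by rw [closure_Ico hab.ne]; exact right_mem_Icc.2 hab.le)
    continuousWithinAt_const (hf.mono Ico_subset_Icc_self) h

/-- The distance between the points where POV and SV come to a halt if both brake at `bmin`. -/
noncomputable def brakingMargin (bmin : ℝ) (x v xf vf : ℝ → ℝ) (t : ℝ) : ℝ :=
  xf t - x t + (vf t ^ 2 - v t ^ 2) / (2 * bmin)

def SafeAt (bmin : ℝ) (x v xf vf : ℝ → ℝ) (t : ℝ) : Prop :=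
  0 < xf t - x t ∧ 0 < brakingMargin bmin x v xf vf t

section Kinematics

variable {x v xf vf af : ℝ → ℝ} {bmin a b : ℝ}

lemma safeAt_of_dRSS_lt {ρR amax bmax t : ℝ}
    (hρ : 0 ≤ ρR) (ha : 0 ≤ amax) (hbmin : 0 < bmin) (hbb : bmin ≤ bmax) (hv : 0 ≤ v t)
    (h : dRSS ρR amax bmin bmax (vf t) (v t) < xf t - x t) : SafeAt bmin x v xf vf t := by
  unfold dRSS at h
  refine ⟨(le_max_left _ _).trans_lt h, ?_⟩
  have hmax := (le_max_right _ _).trans_lt h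
  have hvf : vf t ^ 2 / (2 * bmax) ≤ vf t ^ 2 / (2 * bmin) :=
    div_le_div_of_nonneg_left (sq_nonneg _) (by positivity) (by linarith)
  have hv_sq : v t ^ 2 / (2 * bmin) ≤ (v t + amax * ρR) ^ 2 / (2 * bmin) :=
    div_le_div_of_nonneg_right (by nlinarith [mul_nonneg ha hρ]) (by positivity)
  have : 0 ≤ v t * ρR + 1 / 2 * amax * ρR ^ 2 := by positivity
  unfold brakingMargin
  rw [sub_div]
  linarith

lemma brakingMargin_le_gap {t : ℝ} (hbmin : 0 ≤ bmin)
    (hvf : 0 ≤ vf t) (hfaster : vf t ≤ v t) : brakingMargin bmin x v xf vf t ≤ xf t - x t := by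
  have : vf t ^ 2 ≤ v t ^ 2 := pow_le_pow_left₀ hvf hfaster 2
  have : (vf t ^ 2 - v t ^ 2) / (2 * bmin) ≤ 0 :=
    div_nonpos_of_nonpos_of_nonneg (by linarith) (by positivity)
  unfold brakingMargin
  linarith

lemma gap_le_brakingMargin {t : ℝ} (hbmin : 0 ≤ bmin)
    (hv : 0 ≤ v t) (hslower : v t ≤ vf t) : xf t - x t ≤ brakingMargin bmin x v xf vf t := by
  have : v t ^ 2 ≤ vf t ^ 2 := pow_le_pow_left₀ hv hslower 2
  have : 0 ≤ (vf t ^ 2 - v t ^ 2) / (2 * bmin) := div_nonneg (by linarith) (by positivity)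
  unfold brakingMargin
  linarith

lemma gap_monotoneOn (hx : ∀ t ∈ Icc a b, HasDerivWithinAt x (v t) (Icc a b) t)
    (hxf : ∀ t ∈ Icc a b, HasDerivWithinAt xf (vf t) (Icc a b) t)
    (hslower : ∀ t ∈ Ioo a b, v t ≤ vf t) : MonotoneOn (fun t => xf t - x t) (Icc a b) :=
  monotoneOn_Icc_of_hasDerivWithinAt_nonneg (fun t ht => (hxf t ht).sub (hx t ht))
    fun t ht => sub_nonneg.2 (hslower t ht)

lemma relSpeed_monotoneOn_of_brake
    (hvf : ∀ t ∈ Icc a b, HasDerivWithinAt vf (af t) (Icc a b) t)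
    (hv : ∀ t ∈ Icc a b, HasDerivWithinAt v (-bmin) (Icc a b) t)
    (haf : ∀ t ∈ Icc a b, -bmin ≤ af t) : MonotoneOn (fun t => vf t - v t) (Icc a b) :=
  monotoneOn_Icc_of_hasDerivWithinAt_nonneg
    (fun t ht => ((hvf t ht).sub (hv t ht)).congr_deriv (sub_neg_eq_add _ _))
    fun t ht => by linarith [haf t (Ioo_subset_Icc_self ht)]

lemma brakingMargin_monotoneOn_of_brake (hbmin : 0 < bmin)
    (hx : ∀ t ∈ Icc a b, HasDerivWithinAt x (v t) (Icc a b) t)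
    (hxf : ∀ t ∈ Icc a b, HasDerivWithinAt xf (vf t) (Icc a b) t)
    (hvf : ∀ t ∈ Icc a b, HasDerivWithinAt vf (af t) (Icc a b) t)
    (hv : ∀ t ∈ Icc a b, HasDerivWithinAt v (-bmin) (Icc a b) t)
    (haf : ∀ t ∈ Icc a b, -bmin ≤ af t) (hvf_nonneg : ∀ t ∈ Icc a b, 0 ≤ vf t) :
    MonotoneOn (brakingMargin bmin x v xf vf) (Icc a b) := by
  refine monotoneOn_Icc_of_hasDerivWithinAt_nonneg (f' := fun t => vf t * (bmin + af t) / bmin)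
    (fun t ht => ?_) fun t ht => ?_
  · refine (((hxf t ht).sub (hx t ht)).add
      ((((hvf t ht).pow 2).sub ((hv t ht).pow 2)).div_const (2 * bmin))).congr_deriv ?_
    field_simp
    ring
  · have ht' := Ioo_subset_Icc_self ht
    exact div_nonneg (mul_nonneg (hvf_nonneg t ht') (by linarith [haf t ht'])) hbmin.le

lemma safeAt_of_brake (hbmin : 0 < bmin)
    (hx : ∀ t ∈ Icc a b, HasDerivWithinAt x (v t) (Icc a b) t)
    (hxf : ∀ t ∈ Icc a b, HasDerivWithinAt xf (vf t) (Icc a b) t)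
    (hvf : ∀ t ∈ Icc a b, HasDerivWithinAt vf (af t) (Icc a b) t)
    (hv : ∀ t ∈ Icc a b, HasDerivWithinAt v (-bmin) (Icc a b) t)
    (haf : ∀ t ∈ Icc a b, -bmin ≤ af t) (hvf_pos : ∀ t ∈ Icc a b, 0 < vf t)
    (ha : SafeAt bmin x v xf vf a) : ∀ t ∈ Icc a b, SafeAt bmin x v xf vf t := by
  intro t ht
  have hsub : Icc a t ⊆ Icc a b := Icc_subset_Icc_right ht.2
  have hmargin : ∀ r ∈ Icc a t, 0 < brakingMargin bmin x v xf vf r := fun r hr =>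
    ha.2.trans_le <| brakingMargin_monotoneOn_of_brake hbmin hx hxf hvf hv haf
      (fun r hr => (hvf_pos r hr).le) (left_mem_Icc.2 (ht.1.trans ht.2)) (hsub hr) hr.1
  refine ⟨?_, hmargin t (right_mem_Icc.2 ht.1)⟩
  by_cases hfaster : vf t ≤ v t
  · exact (hmargin t (right_mem_Icc.2 ht.1)).trans_le
      (brakingMargin_le_gap hbmin.le (hvf_pos t ht).le hfaster)
  obtain ⟨τ, hτ, hτgap, hτslower⟩ : ∃ τ ∈ Icc a t, 0 < xf τ - x τ ∧ v τ ≤ vf τ := by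
    by_cases hslower : v a ≤ vf a
    · exact ⟨a, left_mem_Icc.2 ht.1, ha.1, hslower⟩
    have hcont : ContinuousOn (fun r => vf r - v r) (Icc a t) := fun r hr =>
      (((hvf r (hsub hr)).sub (hv r (hsub hr))).mono hsub).continuousWithinAt
    obtain ⟨τ, hτ, hτeq⟩ := intermediate_value_Icc ht.1 hcont
      (⟨by linarith, by linarith⟩ : (0 : ℝ) ∈ Icc (vf a - v a) (vf t - v t))
    have hτeq : vf τ = v τ := sub_eq_zero.1 hτeq
    exact ⟨τ, hτ, (hmargin τ hτ).trans_le (brakingMargin_le_gap hbmin.le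
      (hvf_pos τ (hsub hτ)).le hτeq.le), hτeq.ge⟩
  have hsub' : Icc τ t ⊆ Icc a b := Icc_subset_Icc hτ.1 ht.2
  have hslower : ∀ r ∈ Ioo τ t, v r ≤ vf r := fun r hr => sub_nonneg.1 <|
    (sub_nonneg.2 hτslower).trans <| relSpeed_monotoneOn_of_brake hvf hv haf (hsub hτ)
      (hsub' (Ioo_subset_Icc_self hr)) hr.1.le
  exact hτgap.trans_le <| gap_monotoneOn (forall_hasDerivWithinAt_mono hx hsub')
    (forall_hasDerivWithinAt_mono hxf hsub') hslower (left_mem_Icc.2 hτ.2)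
    (right_mem_Icc.2 hτ.2) hτ.2

lemma safeAt_of_cruise (hbmin : 0 < bmin)
    (hx : ∀ t ∈ Icc a b, HasDerivWithinAt x (v t) (Icc a b) t)
    (hxf : ∀ t ∈ Icc a b, HasDerivWithinAt xf (vf t) (Icc a b) t)
    (hv : ∀ t ∈ Icc a b, HasDerivWithinAt v 0 (Icc a b) t)
    (hv_nonneg : 0 ≤ v a) (hslower : ∀ t ∈ Ioc a b, v a ≤ vf t)
    (ha : SafeAt bmin x v xf vf a) : ∀ t ∈ Icc a b, SafeAt bmin x v xf vf t := by
  intro t ht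
  rcases ht.1.eq_or_lt with rfl | hat
  · exact ha
  have hv_const := eq_left_of_hasDerivWithinAt_zero hv
  have hgap : 0 < xf t - x t := ha.1.trans_le <|
    gap_monotoneOn hx hxf (fun r hr => (hv_const r (Ioo_subset_Icc_self hr)).trans_le
      (hslower r (Ioo_subset_Ioc_self hr))) (left_mem_Icc.2 (ht.1.trans ht.2)) ht ht.1
  have hvt : v t = v a := hv_const t ht
  refine ⟨hgap, hgap.trans_le (gap_le_brakingMargin hbmin.le ?_ ?_)⟩
  · exact hvt ▸ hv_nonneg
  · exact hvt ▸ hslower t ⟨hat, ht.2⟩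

end Kinematics

theorem one_way_goal_achievement_general
    (ρR amax bmin bmax vmin ytgt : ℝ)
    (hρ : 0 < ρR) (ha : 0 < amax) (hbmin : 0 < bmin)
    (hbb : bmin ≤ bmax) (hvmin : 0 < vmin)
    (x v xf vf af : ℝ → ℝ) (t1 t2 t3 : ℝ)
    (ht1 : 0 ≤ t1) (ht12 : t1 ≤ t2) (ht23 : t2 ≤ t3)
    -- continuous dynamics of SV's position and POV
    (hx : ∀ t ∈ Set.Icc 0 t3, HasDerivWithinAt x (v t) (Set.Icc 0 t3) t)
    (hxf : ∀ t ∈ Set.Icc 0 t3, HasDerivWithinAt xf (vf t) (Set.Icc 0 t3) t)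
    (hvf : ∀ t ∈ Set.Icc 0 t3, HasDerivWithinAt vf (af t) (Set.Icc 0 t3) t)
    -- SV's velocity: brake, cruise, brake
    (hv1 : ∀ t ∈ Set.Icc 0 t1, HasDerivWithinAt v (-bmin) (Set.Icc 0 t1) t)
    (hv2 : ∀ t ∈ Set.Icc t1 t2, HasDerivWithinAt v 0 (Set.Icc t1 t2) t)
    (hv3 : ∀ t ∈ Set.Icc t2 t3, HasDerivWithinAt v (-bmin) (Set.Icc t2 t3) t)
    -- loop invariants inside each phase, loop conditions failing at exits
    (hp1 : ∀ t ∈ Set.Ico 0 t1, v t > vmin ∧ x t < ytgt)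
    (he1 : ¬ (v t1 > vmin ∧ x t1 < ytgt))
    (hp2 : ∀ t ∈ Set.Ico t1 t2, x t < ytgt)
    (he2 : ¬ (x t2 < ytgt))
    (hp3 : ∀ t ∈ Set.Ico t2 t3, v t > 0)
    (he3 : ¬ (v t3 > 0))
    -- assumption A throughout
    (hA : ∀ t ∈ Set.Icc 0 t3, -bmin < af t ∧ af t < amax ∧ vf t > vmin)
    -- precondition P
    (hP : xf 0 - x 0 > dRSS ρR amax bmin bmax (vf 0) (v 0) ∧ v 0 > 0) :
    v t3 = 0 ∧ x t3 ≥ ytgt ∧ ∀ t ∈ Set.Icc 0 t3, x t < xf t := by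
  have hsub1 : Icc 0 t1 ⊆ Icc 0 t3 := Icc_subset_Icc_right (ht12.trans ht23)
  have hsub2 : Icc t1 t2 ⊆ Icc 0 t3 := Icc_subset_Icc ht1 ht23
  have hsub3 : Icc t2 t3 ⊆ Icc 0 t3 := Icc_subset_Icc_left (ht1.trans ht12)
  have haf : ∀ t ∈ Icc 0 t3, -bmin ≤ af t := fun t ht => (hA t ht).1.le
  have hvf_pos : ∀ t ∈ Icc 0 t3, 0 < vf t := fun t ht => hvmin.trans (hA t ht).2.2
  have hvt1 : 0 < v t1 := by
    rcases ht1.eq_or_lt with h | h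
    · exact h ▸ hP.2
    · exact hvmin.trans_le <| le_of_forall_Ico_le h
        (hv1 t1 (right_mem_Icc.2 ht1)).continuousWithinAt fun t ht => (hp1 t ht).1.le
  have hv_cruise := eq_left_of_hasDerivWithinAt_zero hv2
  have ht23' : t2 < t3 := by
    refine ht23.lt_of_ne fun h => he3 ?_
    rw [← h, hv_cruise t2 (right_mem_Icc.2 ht12)]
    exact hvt1
  have hcruise_slow : t1 < t2 → v t1 ≤ vmin := fun h =>
    not_lt.1 fun hv => he1 ⟨hv, hp2 t1 ⟨le_rfl, h⟩⟩
  have hsafe1 := safeAt_of_brake hbmin (forall_hasDerivWithinAt_mono hx hsub1)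
    (forall_hasDerivWithinAt_mono hxf hsub1) (forall_hasDerivWithinAt_mono hvf hsub1) hv1
    (fun t ht => haf t (hsub1 ht)) (fun t ht => hvf_pos t (hsub1 ht))
    (safeAt_of_dRSS_lt hρ.le ha.le hbmin hbb hP.2.le hP.1)
  have hsafe2 := safeAt_of_cruise hbmin (forall_hasDerivWithinAt_mono hx hsub2)
    (forall_hasDerivWithinAt_mono hxf hsub2) hv2 hvt1.le
    (fun t ht => (hcruise_slow (ht.1.trans_le ht.2)).trans
      (hA t (hsub2 (Ioc_subset_Icc_self ht))).2.2.le)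
    (hsafe1 t1 (right_mem_Icc.2 ht1))
  have hsafe3 := safeAt_of_brake hbmin (forall_hasDerivWithinAt_mono hx hsub3)
    (forall_hasDerivWithinAt_mono hxf hsub3) (forall_hasDerivWithinAt_mono hvf hsub3) hv3
    (fun t ht => haf t (hsub3 ht)) (fun t ht => hvf_pos t (hsub3 ht))
    (hsafe2 t2 (right_mem_Icc.2 ht12))
  refine ⟨?_, ?_, fun t ht => sub_pos.1 ?_⟩
  · exact le_antisymm (not_lt.1 he3) <| le_of_forall_Ico_le ht23'
      (hv3 t3 (right_mem_Icc.2 ht23)).continuousWithinAt fun t ht => (hp3 t ht).le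
  · exact (not_lt.1 he2).trans <| monotoneOn_Icc_of_hasDerivWithinAt_nonneg
      (forall_hasDerivWithinAt_mono hx hsub3) (fun t ht => (hp3 t ⟨ht.1.le, ht.2⟩).le)
      (left_mem_Icc.2 ht23) (right_mem_Icc.2 ht23) ht23
  rcases le_or_gt t t1 with h1 | h1
  · exact (hsafe1 t ⟨ht.1, h1⟩).1
  rcases le_or_gt t t2 with h2 | h2
  · exact (hsafe2 t ⟨h1.le, h2⟩).1
  · exact (hsafe3 t ⟨h2.le, ht.2⟩).1

/-- One-way traffic goal achievement under the strong assumption: an execution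
of `α ≡ (dwhile (v > vmin ∧ x < ytgt) brake); (dwhile (x < ytgt) cruise);
(dwhile (v > 0) brake)` — presented by its phase-switching times
`t1 ≤ t2 ≤ t3`, with phase invariants holding strictly inside each phase and
the loop conditions failing at the exits — terminates with `v = 0` and
`x ≥ ytgt`, and satisfies `x < x_f` throughout, provided the assumption
`−bmin < a_f < amax ∧ v_f > vmin` holds throughout and the precondition
`x_f − x > dRSS(v_f, v) ∧ v > 0` holds initially. -/
theorem one_way_goal_achievement
    (ρR amax bmin bmax vmin ytgt : ℝ)
    (hρ : 0 < ρR) (ha : 0 < amax) (hbmin : 0 < bmin) (hbmax : 0 < bmax)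
    (hbb : bmin ≤ bmax) (hvmin : 0 < vmin)
    (x v xf vf af : ℝ → ℝ) (t1 t2 t3 : ℝ)
    (ht1 : 0 ≤ t1) (ht12 : t1 ≤ t2) (ht23 : t2 ≤ t3)
    -- continuous dynamics of SV's position and POV
    (hx : ∀ t ∈ Set.Icc 0 t3, HasDerivWithinAt x (v t) (Set.Icc 0 t3) t)
    (hxf : ∀ t ∈ Set.Icc 0 t3, HasDerivWithinAt xf (vf t) (Set.Icc 0 t3) t)
    (hvf : ∀ t ∈ Set.Icc 0 t3, HasDerivWithinAt vf (af t) (Set.Icc 0 t3) t)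
    -- SV's velocity: brake, cruise, brake
    (hv1 : ∀ t ∈ Set.Icc 0 t1, HasDerivWithinAt v (-bmin) (Set.Icc 0 t1) t)
    (hv2 : ∀ t ∈ Set.Icc t1 t2, HasDerivWithinAt v 0 (Set.Icc t1 t2) t)
    (hv3 : ∀ t ∈ Set.Icc t2 t3, HasDerivWithinAt v (-bmin) (Set.Icc t2 t3) t)
    -- loop invariants inside each phase, loop conditions failing at exits
    (hp1 : ∀ t ∈ Set.Ico 0 t1, v t > vmin ∧ x t < ytgt)
    (he1 : ¬ (v t1 > vmin ∧ x t1 < ytgt))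
    (hp2 : ∀ t ∈ Set.Ico t1 t2, x t < ytgt)
    (he2 : ¬ (x t2 < ytgt))
    (hp3 : ∀ t ∈ Set.Ico t2 t3, v t > 0)
    (he3 : ¬ (v t3 > 0))
    -- assumption A throughout
    (hA : ∀ t ∈ Set.Icc 0 t3, -bmin < af t ∧ af t < amax ∧ vf t > vmin)
    -- precondition P
    (hP : xf 0 - x 0 > dRSS ρR amax bmin bmax (vf 0) (v 0) ∧ v 0 > 0) :
    v t3 = 0 ∧ x t3 ≥ ytgt ∧ ∀ t ∈ Set.Icc 0 t3, x t < xf t :=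
  one_way_goal_achievement_general ρR amax bmin bmax vmin ytgt hρ ha hbmin hbb hvmin x v xf vf af t1
    t2 t3 ht1 ht12 ht23 hx hxf hvf hv1 hv2 hv3 hp1 he1 hp2 he2 hp3 he3 hA hP
end
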